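/- arXiv:2412.21203 — 2 statements merged into one kernel-verified Lean document; each statement's English description precedes it below -/
import Mathlib

section
/- Let n, d, D be positive integers, let j* ≥ 2 be an even integer, and let κ, τ > 0 satisfy n·κ ≥ 1. Let (a_j)_{j≥0} be nonnegative reals with a_0 = 1, a_j = 0 for all 1 ≤ j ≤ j* − 1, and a_j ≤ j^j · κ · τ^{−j/j*} for all j ≥ j*. Then Σ_{i even, 2 ≤ i ≤ D} (i/d)^{i/2} · Σ_{I ∈ ℕ^n, |I| = i} Π_{j=1}^{n} a_{I_j} ≤ Σ_{i even, 2 ≤ i ≤ D} ( i^{4.5} · ( n·κ / (τ·d^{j*/2}) )^{1/j*} )^{i}. In particular, if D^{4.5}·( n·κ / (τ·d^{j*/2}) )^{1/j*} ≤ 1/2 then the left-hand side is at most 1. -/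
noncomputable section

open Finset

lemma genfun (n m : ℕ) (t : ℕ → ℝ) (ht : ∀ p, 0 ≤ t p) :
    (1/2 : ℝ)^m * ∑ I ∈ Finset.Nat.antidiagonalTuple n m, ∏ j : Fin n, t (I j)
      ≤ (∑ p ∈ Finset.range (m+1), t p * (1/2)^p) ^ n := by
  have h1 : (∑ p ∈ Finset.range (m+1), t p * (1/2:ℝ)^p) ^ n
      = ∑ g ∈ Fintype.piFinset (fun _ : Fin n => Finset.range (m+1)),
          ∏ j : Fin n, t (g j) * (1/2)^(g j) := by
    rw [← Finset.prod_univ_sum (fun _ : Fin n => Finset.range (m+1))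
      (fun _ p => t p * (1/2:ℝ)^p)]
    simp [Finset.prod_const]
  rw [h1, Finset.mul_sum]
  have h2 : ∀ I ∈ Finset.Nat.antidiagonalTuple n m,
      (1/2:ℝ)^m * ∏ j : Fin n, t (I j) = ∏ j : Fin n, t (I j) * (1/2)^(I j) := by
    intro I hI
    rw [Finset.prod_mul_distrib, Finset.prod_pow_eq_pow_sum,
      (Finset.Nat.mem_antidiagonalTuple.mp hI), mul_comm]
  rw [Finset.sum_congr rfl h2]
  apply Finset.sum_le_sum_of_subset_of_nonneg
  · intro I hI
    rw [Finset.Nat.mem_antidiagonalTuple] at hI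
    rw [Fintype.mem_piFinset]
    intro j
    rw [Finset.mem_range, Nat.lt_succ_iff, ← hI]
    exact Finset.single_le_sum (fun _ _ => Nat.zero_le _) (Finset.mem_univ j)
  · intro g _ _
    exact Finset.prod_nonneg fun j _ => mul_nonneg (ht _) (by positivity)

lemma tsum_bound (n i : ℕ) (hn : 0 < n) (hi : 2 ≤ i) :
    ∑ I ∈ Finset.Nat.antidiagonalTuple n i,
        ∏ j : Fin n, (if I j = 0 then (1:ℝ) else 1/n) ≤ 4^i := by
  set t : ℕ → ℝ := fun p => if p = 0 then (1:ℝ) else 1/n with ht_def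
  have ht : ∀ p, 0 ≤ t p := by
    intro p; simp only [ht_def]; split <;> positivity
  have hA := genfun n i t ht
  have hgeom : ∑ p ∈ Finset.range i, (1/2:ℝ)^p ≤ 2 := by
    rw [geom_sum_eq (by norm_num), div_le_iff_of_neg (by norm_num)]
    have : (0:ℝ) ≤ (1/2:ℝ)^i := by positivity
    linarith
  have hsum : ∑ p ∈ Finset.range (i+1), t p * (1/2:ℝ)^p ≤ 1 + 1/n := by
    rw [Finset.sum_range_succ']
    have h0 : t 0 * (1/2:ℝ)^0 = 1 := by simp [ht_def]
    rw [h0]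
    have h1 : ∑ p ∈ Finset.range i, t (p+1) * (1/2:ℝ)^(p+1)
        = (1/n) * ((1/2) * ∑ p ∈ Finset.range i, (1/2:ℝ)^p) := by
      rw [Finset.mul_sum, Finset.mul_sum]
      apply Finset.sum_congr rfl
      intro p _
      simp only [ht_def]
      rw [if_neg (Nat.succ_ne_zero p)]
      ring
    rw [h1, add_comm]
    have : (1/(n:ℝ)) * ((1/2) * ∑ p ∈ Finset.range i, (1/2:ℝ)^p) ≤ (1/n) * 1 := by
      apply mul_le_mul_of_nonneg_left _ (by positivity)
      linarith
    linarith
  have hn' : (0:ℝ) < n := by exact_mod_cast hn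
  have hexp : (1 + 1/(n:ℝ))^n ≤ 3 := by
    have h1 : (1 + 1/(n:ℝ)) ≤ Real.exp (1/n) := by
      have := Real.add_one_le_exp (1/(n:ℝ)); linarith
    calc (1 + 1/(n:ℝ))^n ≤ (Real.exp (1/n))^n :=
          pow_le_pow_left₀ (by positivity) h1 n
      _ = Real.exp 1 := by
          rw [← Real.exp_nat_mul, mul_one_div, div_self (ne_of_gt hn')]
      _ ≤ 3 := by linarith [Real.exp_one_lt_d9]
  have hS : (∑ p ∈ Finset.range (i+1), t p * (1/2:ℝ)^p) ^ n ≤ 3 := by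
    calc (∑ p ∈ Finset.range (i+1), t p * (1/2:ℝ)^p) ^ n ≤ (1 + 1/(n:ℝ))^n := by
          apply pow_le_pow_left₀ _ hsum
          exact Finset.sum_nonneg fun p _ => mul_nonneg (ht p) (by positivity)
      _ ≤ 3 := hexp
  have key : (1/2:ℝ)^i * ∑ I ∈ Finset.Nat.antidiagonalTuple n i,
      ∏ j : Fin n, t (I j) ≤ 3 := le_trans hA hS
  have h3 : (3:ℝ) ≤ 2^i := by
    calc (3:ℝ) ≤ 4 := by norm_num
      _ = 2^2 := by norm_num
      _ ≤ 2^i := pow_le_pow_right₀ (by norm_num) hi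
  have hSnn : 0 ≤ ∑ I ∈ Finset.Nat.antidiagonalTuple n i, ∏ j : Fin n, t (I j) :=
    Finset.sum_nonneg fun I _ => Finset.prod_nonneg fun j _ => ht _
  have : ∑ I ∈ Finset.Nat.antidiagonalTuple n i, ∏ j : Fin n, t (I j) ≤ 2^i * 3 := by
    have h2 : (0:ℝ) < (1/2:ℝ)^i := by positivity
    rw [show (2:ℝ)^i * 3 = ((1/2:ℝ)^i)⁻¹ * 3 by rw [← inv_pow]; norm_num]
    rw [← le_div_iff₀' h2] at key
    calc _ ≤ 3 / (1/2:ℝ)^i := key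
      _ = ((1/2:ℝ)^i)⁻¹ * 3 := by ring
  calc ∑ I ∈ Finset.Nat.antidiagonalTuple n i,
        ∏ j : Fin n, (if I j = 0 then (1:ℝ) else 1/n) ≤ 2^i * 3 := this
    _ ≤ 2^i * 2^i := by nlinarith [pow_pos (show (0:ℝ) < 2 by norm_num) i]
    _ = 4^i := by rw [← mul_pow]; norm_num


-- coefficient domination
lemma coeff_bound (n i jstar : ℕ) (κ τ : ℝ) (a : ℕ → ℝ)
    (hn : 0 < n) (hj2 : 2 ≤ jstar)
    (hκ : 0 < κ) (hτ : 0 < τ) (hnκ : 1 ≤ (n : ℝ) * κ)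
    (ha0 : a 0 = 1) (hnonneg : ∀ j, 0 ≤ a j)
    (hzero : ∀ j, 1 ≤ j → j ≤ jstar - 1 → a j = 0)
    (hgrowth : ∀ j, jstar ≤ j →
      a j ≤ (j : ℝ) ^ j * κ * τ ^ (-(j : ℝ) / jstar))
    (p : ℕ) (hpi : p ≤ i) :
    a p ≤ ((i:ℝ) * ((n * κ / τ) ^ ((1:ℝ)/jstar)))^p
      * (if p = 0 then (1:ℝ) else 1/n) := by
  have hin : (0:ℝ) < n := by exact_mod_cast hn
  have hj0 : (0:ℝ) < jstar := by positivity
  have hY : (0:ℝ) < (n * κ / τ : ℝ) ^ ((1:ℝ)/jstar) :=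
    Real.rpow_pos_of_pos (by positivity) _
  rcases Nat.eq_zero_or_pos p with hp0 | hp1
  · subst hp0; simp [ha0]
  rw [if_neg (Nat.pos_iff_ne_zero.mp hp1)]
  rcases lt_or_ge p jstar with hpj | hpj
  · rw [hzero p hp1 (by omega)]
    positivity
  -- main case: jstar ≤ p ≤ i
  have hip : (0:ℝ) < i := by
    have : 0 < i := lt_of_lt_of_le (by omega) hpi
    exact_mod_cast this
  have h1 : a p ≤ (i:ℝ)^p * κ * τ ^ (-(p:ℝ)/jstar) := by
    refine le_trans (hgrowth p hpj) ?_
    have hpp : ((p:ℝ))^p ≤ (i:ℝ)^p :=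
      pow_le_pow_left₀ (by positivity) (by exact_mod_cast hpi) p
    have hτp : (0:ℝ) < τ ^ (-(p:ℝ)/jstar) := Real.rpow_pos_of_pos hτ _
    nlinarith [mul_le_mul_of_nonneg_right hpp (le_of_lt hκ)]
  refine le_trans h1 ?_
  -- compute RHS
  have hrhs : ((i:ℝ) * ((n * κ / τ) ^ ((1:ℝ)/jstar)))^p * (1/(n:ℝ))
      = (i:ℝ)^p * ((1/n) * ((n*κ) ^ ((p:ℝ)/jstar))) * τ ^ (-(p:ℝ)/jstar) := by
    rw [mul_pow]
    have h2 : (((n:ℝ) * κ / τ) ^ ((1:ℝ)/jstar))^p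
        = ((n:ℝ)*κ) ^ ((p:ℝ)/jstar) * τ ^ (-(p:ℝ)/jstar) := by
      rw [← Real.rpow_natCast (((n:ℝ) * κ / τ) ^ ((1:ℝ)/jstar)) p,
        ← Real.rpow_mul (by positivity), one_div, inv_mul_eq_div,
        Real.div_rpow (by positivity) (le_of_lt hτ),
        div_eq_mul_inv, ← Real.rpow_neg (le_of_lt hτ), neg_div]
    rw [h2]; ring
  rw [hrhs]
  have hτp : (0:ℝ) < τ ^ (-(p:ℝ)/jstar) := Real.rpow_pos_of_pos hτ _
  have hkey : κ ≤ (1/(n:ℝ)) * ((n*κ) ^ ((p:ℝ)/jstar)) := by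
    have h3 : ((n:ℝ)*κ) ^ ((1:ℝ)) ≤ ((n:ℝ)*κ) ^ ((p:ℝ)/jstar) := by
      apply Real.rpow_le_rpow_of_exponent_le hnκ
      rw [le_div_iff₀ hj0, one_mul]
      exact_mod_cast hpj
    rw [Real.rpow_one] at h3
    have : (1/(n:ℝ)) * ((n:ℝ)*κ) ≤ (1/(n:ℝ)) * ((n*κ) ^ ((p:ℝ)/jstar)) :=
      mul_le_mul_of_nonneg_left h3 (by positivity)
    calc κ = (1/(n:ℝ)) * ((n:ℝ)*κ) := by field_simp
      _ ≤ _ := this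
  calc (i:ℝ)^p * κ * τ ^ (-(p:ℝ)/jstar)
      ≤ (i:ℝ)^p * ((1/(n:ℝ)) * ((n*κ) ^ ((p:ℝ)/jstar))) * τ ^ (-(p:ℝ)/jstar) := by
        have : (0:ℝ) ≤ (i:ℝ)^p := by positivity
        nlinarith [mul_le_mul_of_nonneg_left hkey this]
    _ = _ := rfl


lemma final_alg (i d jstar n : ℕ) (κ τ : ℝ)
    (hd : 0 < d) (hn : 0 < n) (hκ : 0 < κ) (hτ : 0 < τ)
    (hj2 : 2 ≤ jstar) (hjeven : Even jstar)
    (hieven : Even i) (hi2 : 2 ≤ i) :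
    ((i:ℝ)/d)^(i/2) * (4 * ((i:ℝ) * (((n:ℝ) * κ / τ) ^ ((1:ℝ)/jstar))))^i
      ≤ ((i:ℝ) ^ ((4.5:ℝ)) * (((n:ℝ) * κ / (τ * (d:ℝ)^(jstar/2))) ^ ((1:ℝ)/jstar)))^i := by
  obtain ⟨m, hm⟩ := hieven
  obtain ⟨q, hq⟩ := hjeven
  have him : i / 2 = m := by omega
  have hjq : jstar / 2 = q := by omega
  have hi0 : (0:ℝ) < i := by exact_mod_cast (by omega : 0 < i)
  have hd0 : (0:ℝ) < d := by exact_mod_cast hd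
  have hj0 : (0:ℝ) < jstar := by exact_mod_cast (by omega : 0 < jstar)
  have hq0 : (0:ℝ) < q := by exact_mod_cast (by omega : 0 < q)
  set Y : ℝ := ((n:ℝ) * κ / τ) ^ ((1:ℝ)/jstar) with hYdef
  have hY : 0 < Y := Real.rpow_pos_of_pos (by positivity) _
  have hX : ((n:ℝ) * κ / (τ * (d:ℝ)^(jstar/2))) ^ ((1:ℝ)/jstar)
      = Y / (d:ℝ) ^ ((1:ℝ)/2) := by
    rw [hjq]
    have h1 : (n:ℝ) * κ / (τ * (d:ℝ)^q) = ((n:ℝ) * κ / τ) / (d:ℝ)^q := by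
      field_simp
    rw [h1, Real.div_rpow (by positivity) (by positivity), hYdef]
    congr 1
    rw [← Real.rpow_natCast (d:ℝ) q, ← Real.rpow_mul hd0.le]
    congr 1
    have h2 : (jstar:ℝ) = 2 * q := by exact_mod_cast (by omega : jstar = 2 * q)
    rw [h2]
    field_simp
  rw [hX, him]
  have hdpow : ((d:ℝ) ^ ((1:ℝ)/2)) ^ i = (d:ℝ)^m := by
    rw [← Real.rpow_natCast ((d:ℝ) ^ ((1:ℝ)/2)) i, ← Real.rpow_mul hd0.le]
    rw [show (1:ℝ)/2 * i = (m:ℝ) by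
      have h3 : (i:ℝ) = 2 * m := by exact_mod_cast (by omega : i = 2 * m)
      rw [h3]; ring]
    exact Real.rpow_natCast _ m
  have hipow : ((i:ℝ) ^ ((1:ℝ)/2)) ^ i = (i:ℝ)^m := by
    rw [← Real.rpow_natCast ((i:ℝ) ^ ((1:ℝ)/2)) i, ← Real.rpow_mul hi0.le]
    rw [show (1:ℝ)/2 * i = (m:ℝ) by
      have h3 : (i:ℝ) = 2 * m := by exact_mod_cast (by omega : i = 2 * m)
      rw [h3]; ring]
    exact Real.rpow_natCast _ m
  have hbase : (i:ℝ) ^ ((1:ℝ)/2) * 4 * (i:ℝ) ≤ (i:ℝ) ^ ((4.5:ℝ)) := by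
    have hsplit : (i:ℝ) ^ ((4.5:ℝ))
        = (i:ℝ) ^ ((1:ℝ)/2) * ((i:ℝ) ^ ((1:ℝ)) * (i:ℝ) ^ ((3:ℝ))) := by
      rw [← Real.rpow_add hi0, ← Real.rpow_add hi0]
      norm_num
    rw [hsplit, Real.rpow_one]
    have h4 : (4:ℝ) ≤ (i:ℝ) ^ ((3:ℝ)) := by
      rw [show (3:ℝ) = ((3:ℕ):ℝ) by norm_num, Real.rpow_natCast]
      calc (4:ℝ) ≤ 2^3 := by norm_num
        _ ≤ (i:ℝ)^3 := pow_le_pow_left₀ (by norm_num) (by exact_mod_cast hi2) 3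
    have hh : (0:ℝ) < (i:ℝ) ^ ((1:ℝ)/2) := Real.rpow_pos_of_pos hi0 _
    nlinarith [mul_le_mul_of_nonneg_left h4 (le_of_lt (mul_pos hh hi0))]
  have key : ((i:ℝ) ^ ((1:ℝ)/2) * 4 * (i:ℝ))^i ≤ ((i:ℝ) ^ ((4.5:ℝ)))^i :=
    pow_le_pow_left₀ (by positivity) hbase i
  have e1 : ((i:ℝ)/d)^m * (4*((i:ℝ)*Y))^i
      = (((i:ℝ) ^ ((1:ℝ)/2) * 4 * (i:ℝ))^i * Y^i) / (d:ℝ)^m := by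
    rw [div_pow, mul_pow, mul_pow, mul_pow, mul_pow, hipow]
    ring
  have e2 : ((i:ℝ) ^ ((4.5:ℝ)) * (Y/(d:ℝ) ^ ((1:ℝ)/2)))^i
      = (((i:ℝ) ^ ((4.5:ℝ)))^i * Y^i) / (d:ℝ)^m := by
    rw [mul_pow, div_pow, hdpow]
    ring
  rw [e1, e2]
  gcongr


/-- **Bounding the degree-`D` advantage expression via growth of Hermite coefficients.**
If `a₀ = 1`, `a_j = 0` for `1 ≤ j ≤ j* − 1` and `a_j ≤ j^j κ τ^{−j/j*}` for `j ≥ j*`,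
with `nκ ≥ 1`, then
`∑_{i even, 2 ≤ i ≤ D} (i/d)^{i/2} ∑_{|I| = i} ∏_j a_{I_j}
  ≤ ∑_{i even, 2 ≤ i ≤ D} (i^{4.5} (nκ/(τ d^{j*/2}))^{1/j*})^i`;
in particular, if `D^{4.5} (nκ/(τ d^{j*/2}))^{1/j*} ≤ 1/2` the left-hand side is at
most `1`. -/
theorem stmt_16 (n d D jstar : ℕ) (κ τ : ℝ) (a : ℕ → ℝ)
    (hn : 0 < n) (hd : 0 < d) (hD : 0 < D)
    (hj2 : 2 ≤ jstar) (hjeven : Even jstar)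
    (hκ : 0 < κ) (hτ : 0 < τ) (hnκ : 1 ≤ (n : ℝ) * κ)
    (ha0 : a 0 = 1) (hnonneg : ∀ j, 0 ≤ a j)
    (hzero : ∀ j, 1 ≤ j → j ≤ jstar - 1 → a j = 0)
    (hgrowth : ∀ j, jstar ≤ j →
      a j ≤ (j : ℝ) ^ j * κ * τ ^ (-(j : ℝ) / jstar)) :
    ((∑ i ∈ (Finset.range (D + 1)).filter (fun i => Even i ∧ 2 ≤ i),
        ((i : ℝ) / d) ^ (i / 2) *
          ∑ I ∈ Finset.Nat.antidiagonalTuple n i, ∏ j : Fin n, a (I j))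
      ≤ ∑ i ∈ (Finset.range (D + 1)).filter (fun i => Even i ∧ 2 ≤ i),
          ((i : ℝ) ^ ((4.5 : ℝ)) *
            ((n : ℝ) * κ / (τ * (d : ℝ) ^ (jstar / 2))) ^ ((1 : ℝ) / jstar)) ^ i) ∧
    ((D : ℝ) ^ ((4.5 : ℝ)) *
        ((n : ℝ) * κ / (τ * (d : ℝ) ^ (jstar / 2))) ^ ((1 : ℝ) / jstar) ≤ 1 / 2 →
      (∑ i ∈ (Finset.range (D + 1)).filter (fun i => Even i ∧ 2 ≤ i),
          ((i : ℝ) / d) ^ (i / 2) *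
            ∑ I ∈ Finset.Nat.antidiagonalTuple n i, ∏ j : Fin n, a (I j)) ≤ 1) := by
  have part1 : (∑ i ∈ (Finset.range (D + 1)).filter (fun i => Even i ∧ 2 ≤ i),
        ((i : ℝ) / d) ^ (i / 2) *
          ∑ I ∈ Finset.Nat.antidiagonalTuple n i, ∏ j : Fin n, a (I j))
      ≤ ∑ i ∈ (Finset.range (D + 1)).filter (fun i => Even i ∧ 2 ≤ i),
          ((i : ℝ) ^ ((4.5 : ℝ)) *
            ((n : ℝ) * κ / (τ * (d : ℝ) ^ (jstar / 2))) ^ ((1 : ℝ) / jstar)) ^ i := by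
    apply Finset.sum_le_sum
    intro i hi
    rw [Finset.mem_filter, Finset.mem_range] at hi
    obtain ⟨hiD, hieven, hi2⟩ := hi
    set B0 : ℝ := (i:ℝ) * (((n:ℝ) * κ / τ) ^ ((1:ℝ)/jstar)) with hB0
    have hi0 : (0:ℝ) < i := by exact_mod_cast (by omega : 0 < i)
    have hB0nn : 0 ≤ B0 := by
      apply mul_nonneg hi0.le
      exact Real.rpow_nonneg (by positivity) _
    have step1 : (∑ I ∈ Finset.Nat.antidiagonalTuple n i, ∏ j : Fin n, a (I j))
        ≤ B0^i * ∑ I ∈ Finset.Nat.antidiagonalTuple n i,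
            ∏ j : Fin n, (if I j = 0 then (1:ℝ) else 1/n) := by
      rw [Finset.mul_sum]
      apply Finset.sum_le_sum
      intro I hI
      have hIsum := Finset.Nat.mem_antidiagonalTuple.mp hI
      have hIle : ∀ j : Fin n, I j ≤ i := by
        intro j
        rw [← hIsum]
        exact Finset.single_le_sum (fun _ _ => Nat.zero_le _) (Finset.mem_univ j)
      calc ∏ j : Fin n, a (I j)
          ≤ ∏ j : Fin n, (B0^(I j) * (if I j = 0 then (1:ℝ) else 1/n)) := by
            apply Finset.prod_le_prod (fun j _ => hnonneg _)
            intro j _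
            exact coeff_bound n i jstar κ τ a hn hj2 hκ hτ hnκ ha0 hnonneg
              hzero hgrowth (I j) (hIle j)
        _ = B0^i * ∏ j : Fin n, (if I j = 0 then (1:ℝ) else 1/n) := by
            rw [Finset.prod_mul_distrib, Finset.prod_pow_eq_pow_sum, hIsum]
    have step2 : (∑ I ∈ Finset.Nat.antidiagonalTuple n i, ∏ j : Fin n, a (I j))
        ≤ (4 * B0)^i := by
      calc (∑ I ∈ Finset.Nat.antidiagonalTuple n i, ∏ j : Fin n, a (I j))
          ≤ B0^i * ∑ I ∈ Finset.Nat.antidiagonalTuple n i,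
              ∏ j : Fin n, (if I j = 0 then (1:ℝ) else 1/n) := step1
        _ ≤ B0^i * 4^i := by
            apply mul_le_mul_of_nonneg_left (tsum_bound n i hn hi2) (by positivity)
        _ = (4 * B0)^i := by rw [← mul_pow]; ring_nf
    calc ((i : ℝ) / d) ^ (i / 2) *
          ∑ I ∈ Finset.Nat.antidiagonalTuple n i, ∏ j : Fin n, a (I j)
        ≤ ((i : ℝ) / d) ^ (i / 2) * (4 * B0)^i := by
          apply mul_le_mul_of_nonneg_left step2 (by positivity)
      _ ≤ _ := final_alg i d jstar n κ τ hd hn hκ hτ hj2 hjeven hieven hi2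
  refine ⟨part1, fun hsmall => ?_⟩
  have hX : (0:ℝ) ≤ ((n : ℝ) * κ / (τ * (d : ℝ) ^ (jstar / 2))) ^ ((1 : ℝ) / jstar) :=
    Real.rpow_nonneg (by positivity) _
  have part2 : (∑ i ∈ (Finset.range (D + 1)).filter (fun i => Even i ∧ 2 ≤ i),
          ((i : ℝ) ^ ((4.5 : ℝ)) *
            ((n : ℝ) * κ / (τ * (d : ℝ) ^ (jstar / 2))) ^ ((1 : ℝ) / jstar)) ^ i)
      ≤ ∑ i ∈ (Finset.range (D + 1)).filter (fun i => Even i ∧ 2 ≤ i), (1/2:ℝ)^i := by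
    apply Finset.sum_le_sum
    intro i hi
    rw [Finset.mem_filter, Finset.mem_range] at hi
    obtain ⟨hiD, hieven, hi2⟩ := hi
    apply pow_le_pow_left₀
    · exact mul_nonneg (Real.rpow_nonneg (by positivity) _) hX
    · refine le_trans ?_ hsmall
      apply mul_le_mul_of_nonneg_right _ hX
      apply Real.rpow_le_rpow (by positivity) _ (by norm_num)
      exact_mod_cast Nat.lt_succ_iff.mp hiD
  have part3 : (∑ i ∈ (Finset.range (D + 1)).filter (fun i => Even i ∧ 2 ≤ i),
      (1/2:ℝ)^i) ≤ 1 := by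
    have hsub : (∑ i ∈ (Finset.range (D + 1)).filter (fun i => Even i ∧ 2 ≤ i),
        (1/2:ℝ)^i) ≤ ∑ i ∈ Finset.Ico 2 (D+1), (1/2:ℝ)^i := by
      apply Finset.sum_le_sum_of_subset_of_nonneg
      · intro i hi
        rw [Finset.mem_filter, Finset.mem_range] at hi
        rw [Finset.mem_Ico]
        exact ⟨hi.2.2, hi.1⟩
      · intro i _ _; positivity
    have hgeom : ∑ p ∈ Finset.range (D+1), (1/2:ℝ)^p ≤ 2 := by
      rw [geom_sum_eq (by norm_num), div_le_iff_of_neg (by norm_num)]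
      have : (0:ℝ) ≤ (1/2:ℝ)^(D+1) := by positivity
      linarith
    have hIco : ∑ i ∈ Finset.Ico 2 (D+1), (1/2:ℝ)^i
        = (∑ p ∈ Finset.range (D+1), (1/2:ℝ)^p) - (3/2 : ℝ) := by
      rw [Finset.sum_Ico_eq_sub _ (by omega)]
      norm_num [Finset.sum_range_succ]
    linarith [hsub, hgeom, hIco.le, hIco.ge]
  calc _ ≤ _ := part1
    _ ≤ _ := part2
    _ ≤ 1 := part3
end
end

section
/- There exists a constant η₀ ∈ (0,1) with the following property. For every η ∈ (0, η₀) and every σ² ∈ (0, 0.1), setting δ = √η/1000, there exists a discrete probability distribution F on the interval [−10/√η, 10/√η] supported on at most 4 points whose first three moments are: E_F[X] = −(1−η)·δ/η, E_F[X²] = ( 1 − (1−η)·(δ² + σ²) − η ) / η, and E_F[X³] = −(1−η)·δ·(δ² + 3σ²)/η + 3·(1−η)·δ/η. -/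
noncomputable section

set_option maxHeartbeats 4000000

noncomputable section

lemma two_point_sum (c s : ℝ) (hs : s ≠ 0) : (s - c)/(2*s) + (c + s)/(2*s) = 1 := by
  field_simp; ring

lemma two_point_m1 (μ c s : ℝ) (hs : s ≠ 0) :
    (s-c)/(2*s) * (μ + (c+s)/2) + (c+s)/(2*s) * (μ - (s-c)/2) = μ := by
  field_simp; ring

lemma two_point_m2 (μ v c s : ℝ) (hs0 : s ≠ 0) (hs : s^2 = c^2 + 4*v) :
    (s-c)/(2*s) * (μ + (c+s)/2)^2 + (c+s)/(2*s) * (μ - (s-c)/2)^2 = μ^2 + v := by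
  field_simp
  linear_combination (2*s) * hs

lemma two_point_m3 (μ v c s : ℝ) (hs0 : s ≠ 0) (hs : s^2 = c^2 + 4*v) :
    (s-c)/(2*s) * (μ + (c+s)/2)^3 + (c+s)/(2*s) * (μ - (s-c)/2)^3 = μ^3 + 3*μ*v + v*c := by
  field_simp
  linear_combination (4*s*(c+3*μ)) * hs

lemma aux_stmt18 (r σsq : ℝ) (hr0 : 0 < r) (hr1 : r < 1/10) (hσ : 0 < σsq) (hσ' : σsq < 1/10) :
    ∃ (x : Fin 4 → ℝ) (w : Fin 4 → ℝ),
      (∀ i, 0 ≤ w i) ∧ (∑ i, w i) = 1 ∧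
      (∀ i, |x i| ≤ 10 / r) ∧
      (∑ i, w i * x i) = -((1 - r^2) * (r / 1000)) / r^2 ∧
      (∑ i, w i * x i ^ 2) = (1 - (1 - r^2) * ((r / 1000) ^ 2 + σsq) - r^2) / r^2 ∧
      (∑ i, w i * x i ^ 3) =
        -((1 - r^2) * (r / 1000) * ((r / 1000) ^ 2 + 3 * σsq)) / r^2 +
          3 * (1 - r^2) * (r / 1000) / r^2 := by
  have hrne : r ≠ 0 := ne_of_gt hr0
  have hr2 : (0:ℝ) < r^2 := by positivity
  obtain ⟨μ, hμ⟩ : ∃ x : ℝ, x = -((1 - r^2) * (r / 1000)) / r^2 := ⟨_, rfl⟩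
  obtain ⟨m2, hm2⟩ : ∃ x : ℝ, x = (1 - (1 - r^2) * ((r / 1000) ^ 2 + σsq) - r^2) / r^2 := ⟨_, rfl⟩
  obtain ⟨m3, hm3⟩ : ∃ x : ℝ, x = -((1 - r^2) * (r / 1000) * ((r / 1000) ^ 2 + 3 * σsq)) / r^2 +
      3 * (1 - r^2) * (r / 1000) / r^2 := ⟨_, rfl⟩
  obtain ⟨v, hv⟩ : ∃ x : ℝ, x = m2 - μ^2 := ⟨_, rfl⟩
  obtain ⟨num, hnumdef⟩ : ∃ x : ℝ, x = m3 - μ^3 - 3*μ*v := ⟨_, rfl⟩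
  obtain ⟨c, hcdef⟩ : ∃ x : ℝ, x = num / v := ⟨_, rfl⟩
  have hμr : μ * r = -(1 - r^2)/1000 := by rw [hμ]; field_simp
  have hvr : v * r^2 = (1-r^2)*(1 - σsq - r^2/1000000) - (1-r^2)^2/1000000 := by
    rw [hv, hm2, hμ]; field_simp; ring
  have hvlb : 4/5 ≤ v * r^2 := by
    rw [hvr]; nlinarith [hr0, hr1, hσ, hσ', sq_nonneg r, mul_pos hr0 hr0]
  have hvub : v * r^2 ≤ 1 := by
    rw [hvr]; nlinarith [hr0, hr1, hσ, hσ', sq_nonneg r, mul_pos hr0 hr0]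
  have hvr2nn : (0:ℝ) ≤ v * r^2 := le_trans (by norm_num) hvlb
  have hv0 : 0 < v := by nlinarith [hvlb, hr2]
  have hm3r : m3 * r^2 = (1-r^2)*(r/1000)*(3 - (r/1000)^2 - 3*σsq) := by
    rw [hm3]; field_simp; ring
  have hmain : num * r^3 = m3*r^2*r + ((1-r^2)/1000)^3 + 3*((1-r^2)/1000)*(v*r^2) := by
    rw [hnumdef]
    linear_combination (-((μ*r)^2 + (μ*r)*(-(1-r^2)/1000) + ((1-r^2)/1000)^2 + 3*(v*r^2))) * hμr
  have hb1 : (0:ℝ) ≤ 1 - r^2 := by nlinarith [hr0, hr1]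
  have hb2 : (0:ℝ) ≤ 3 - (r/1000)^2 - 3*σsq := by nlinarith [hr0, hr1, hσ', sq_nonneg r]
  have hb3 : (1-r^2)*(3 - (r/1000)^2 - 3*σsq) ≤ 3 := by
    nlinarith [hb1, hb2, hσ, sq_nonneg r, sq_nonneg (r/1000)]
  have ht1a : (0:ℝ) ≤ m3*r^2 := by
    rw [hm3r]; exact mul_nonneg (mul_nonneg hb1 (by positivity)) hb2
  have ht1b : m3*r^2 ≤ 3*r/1000 := by
    rw [hm3r]; nlinarith [hb3, hr0]
  have hG : ((1-r^2)/1000)^3 ≤ 1/1000000000 := by nlinarith [sq_nonneg r, hr1, hr0]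
  have hG0 : (0:ℝ) ≤ (1-r^2)/1000 := by nlinarith [hr1, hr0]
  have hTr : m3*r^2*r ≤ 1/1000 := by nlinarith [ht1b, hr0, hr1]
  have h3G : 3*((1-r^2)/1000)*(v*r^2) ≤ 3/1000 := by nlinarith [hvub, hvr2nn, hG0]
  have hnlb : (0:ℝ) ≤ num * r^3 := by
    nlinarith [hmain, hr0, mul_nonneg ht1a hr0.le, mul_nonneg hG0 hvr2nn, pow_nonneg hG0 3]
  have hnub : num * r^3 ≤ 4/5 := by
    rw [hmain]; linarith [hTr, hG, h3G]
  clear hmain hTr hG h3G ht1a ht1b hb3 hb2 hm3r hvr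
  have hnum0 : (0:ℝ) ≤ num := by
    have h := div_nonneg hnlb (pow_pos hr0 3).le
    rwa [mul_div_cancel_right₀ _ (pow_ne_zero 3 hrne)] at h
  have hc0 : (0:ℝ) ≤ c := hcdef ▸ div_nonneg hnum0 hv0.le
  have hcv : c * v = num := by rw [hcdef]; exact div_mul_cancel₀ _ (ne_of_gt hv0)
  have hkey : c * r * (v * r^2) ≤ 4/5 := by
    calc c * r * (v * r^2) = c * v * r^3 := by ring
    _ = num * r^3 := by rw [hcv]
    _ ≤ 4/5 := hnub
  have hcru : c*r ≤ 1 := by nlinarith [hkey, hvlb, hvr2nn]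
  have hcr0 : (0:ℝ) ≤ c*r := mul_nonneg hc0 hr0.le
  clear hnlb hnub hkey
  have hs2pos : (0:ℝ) < c^2 + 4*v := by nlinarith [sq_nonneg c, hv0]
  obtain ⟨s, hsdef⟩ : ∃ x : ℝ, x = Real.sqrt (c^2 + 4*v) := ⟨_, rfl⟩
  have hs0 : 0 < s := hsdef ▸ Real.sqrt_pos.mpr hs2pos
  have hs2 : s^2 = c^2 + 4*v := by rw [hsdef]; exact Real.sq_sqrt hs2pos.le
  have hsne : s ≠ 0 := ne_of_gt hs0
  have hcub : c ≤ s := by nlinarith [hs2, hv0, hs0]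
  have hclb : -s ≤ c := by nlinarith [hs2, hv0, hs0]
  have hs2r : s^2*r^2 = (c*r)^2 + 4*(v*r^2) := by rw [hs2]; ring
  have hsr : s*r ≤ 3 := by nlinarith [hs2r, hcru, hcr0, hvub, sq_nonneg (s*r - 3)]
  have hsr0 : (0:ℝ) ≤ s*r := mul_nonneg hs0.le hr0.le
  refine ⟨![μ + (c+s)/2, μ - (s-c)/2, 0, 0], ![(s-c)/(2*s), (c+s)/(2*s), 0, 0],
    ?_, ?_, ?_, ?_, ?_, ?_⟩
  · intro i
    fin_cases i <;> norm_num <;> apply div_nonneg <;> linarith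
  · simp [Fin.sum_univ_four]
    field_simp
    ring
  · have key : ∀ y : ℝ, -10 ≤ y * r → y * r ≤ 10 → |y| ≤ 10 / r := by
      intro y h1 h2
      rw [abs_le]
      constructor
      · rw [show -(10/r) = (-10)/r by ring, div_le_iff₀ hr0]; linarith
      · rw [le_div_iff₀ hr0]; linarith
    intro i
    fin_cases i <;> norm_num <;>
      first
        | positivity
        | (apply key <;> nlinarith [hμr, hcru, hcr0, hsr, hsr0, hr0, hr1, mul_pos hr0 hr0])
  · simp [Fin.sum_univ_four]
    linear_combination two_point_m1 μ c s hsne + hμ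
  · simp [Fin.sum_univ_four]
    linear_combination two_point_m2 μ v c s hsne hs2 + hv + hm2
  · simp [Fin.sum_univ_four]
    linear_combination two_point_m3 μ v c s hsne hs2 + hcv + hnumdef + hm3


/-- **Existence of a 4-point discrete distribution with prescribed first three moments.**
There is `η₀ ∈ (0,1)` such that for all `η ∈ (0, η₀)` and `σ² ∈ (0, 0.1)`, with
`δ = √η/1000`, there is a discrete probability distribution on `[−10/√η, 10/√η]`
supported on at most 4 points with first moment `−(1−η)δ/η`, second moment
`(1 − (1−η)(δ² + σ²) − η)/η` and third moment `−(1−η)δ(δ² + 3σ²)/η + 3(1−η)δ/η`. -/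
theorem stmt_18 :
    ∃ η₀ : ℝ, 0 < η₀ ∧ η₀ < 1 ∧
      ∀ η σsq : ℝ, 0 < η → η < η₀ → 0 < σsq → σsq < 0.1 →
        ∃ (x : Fin 4 → ℝ) (w : Fin 4 → ℝ),
          (∀ i, 0 ≤ w i) ∧ (∑ i, w i) = 1 ∧
          (∀ i, |x i| ≤ 10 / Real.sqrt η) ∧
          (∑ i, w i * x i) = -((1 - η) * (Real.sqrt η / 1000)) / η ∧
          (∑ i, w i * x i ^ 2) =
            (1 - (1 - η) * ((Real.sqrt η / 1000) ^ 2 + σsq) - η) / η ∧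
          (∑ i, w i * x i ^ 3) =
            -((1 - η) * (Real.sqrt η / 1000) *
                ((Real.sqrt η / 1000) ^ 2 + 3 * σsq)) / η +
              3 * (1 - η) * (Real.sqrt η / 1000) / η := by
  refine ⟨1/100, by norm_num, by norm_num, ?_⟩
  intro η σsq hη hη' hσ hσ'
  obtain ⟨r, hr0, rfl⟩ : ∃ r : ℝ, 0 < r ∧ η = r^2 :=
    ⟨Real.sqrt η, Real.sqrt_pos.mpr hη, (Real.sq_sqrt hη.le).symm⟩
  rw [Real.sqrt_sq hr0.le]
  have hr1 : r < 1/10 := by nlinarith [hη', hr0]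
  exact aux_stmt18 r σsq hr0 hr1 hσ (by norm_num at hσ'; linarith)
end
end
end
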